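/- arXiv:2506.23695 — 5 statements merged into one kernel-verified Lean document; each statement's English description precedes it below -/
import Mathlib

section
/- If w : [0,∞) → [0,∞) is a weight function (non-decreasing, unbounded, continuous) and the weight function system W_w = (w(N·t))_{N∈ℕ} satisfies condition (ω), then w satisfies condition (α): there exist C > 0 and A > 1 such that w(2t) ≤ C·w(t) + log A for all t ≥ 0. -/
/-!
Apply (ω) with `N = 1` and `K = 2M`, and evaluate it at `t / M`: dropping the nonnegative
term `(1 - θ) w(t / M)` leaves `θ w(2t) ≤ w(t) + log C`, which is (α) with constant `1 / θ`.
-/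

lemma mul_le_of_dilation_convex_bound {w : ℝ → ℝ} (hw_nonneg : ∀ t ≥ (0:ℝ), 0 ≤ w t)
    {θ M c : ℝ} (hθ : θ ≤ 1) (hM : 0 < M)
    (h : ∀ s ≥ (0:ℝ), (1 - θ) * w s + θ * w (2 * M * s) ≤ w (M * s) + c) :
    ∀ t ≥ (0:ℝ), θ * w (2 * t) ≤ w t + c := by
  intro t ht
  have hs : 0 ≤ t / M := div_nonneg ht hM.le
  have h_eval := h (t / M) hs
  rw [mul_div_cancel₀ t hM.ne', mul_assoc, mul_div_cancel₀ t hM.ne'] at h_eval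
  nlinarith [hw_nonneg (t / M) hs]

theorem stmt_0_general (w : ℝ → ℝ)
    (hw_nonneg : ∀ t ≥ (0:ℝ), 0 ≤ w t)
    (hω : ∀ N : ℕ, ∃ M : ℕ, N ≤ M ∧ ∀ K : ℕ, M ≤ K →
      ∃ θ C : ℝ, θ ∈ Set.Ioo (0:ℝ) 1 ∧ 1 < C ∧
        ∀ t ≥ (0:ℝ), (1 - θ) * w (N * t) + θ * w (K * t) ≤ w (M * t) + Real.log C) :
    ∃ C > (0:ℝ), ∃ A > (1:ℝ), ∀ t ≥ (0:ℝ), w (2 * t) ≤ C * w t + Real.log A := by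
  obtain ⟨M, hM1, hK⟩ := hω 1
  obtain ⟨θ, C, ⟨hθ0, hθ1⟩, hC1, hineq⟩ := hK (2 * M) (by omega)
  have hM0 : (0:ℝ) < M := by exact_mod_cast hM1
  have hα := mul_le_of_dilation_convex_bound hw_nonneg hθ1.le hM0 (by simpa using hineq)
  refine ⟨θ⁻¹, inv_pos.mpr hθ0, C ^ θ⁻¹, Real.one_lt_rpow hC1 (inv_pos.mpr hθ0), ?_⟩
  intro t ht
  rw [Real.log_rpow (by linarith), ← mul_add, le_inv_mul_iff₀ hθ0]
  exact hα t ht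

/-- If `w` is a weight function (non-decreasing, unbounded, continuous on `[0,∞)`)
and the weight function system `W_w = (w(N·t))` satisfies condition (ω),
then `w` satisfies condition (α). -/
theorem stmt_0 (w : ℝ → ℝ)
    (hw_nonneg : ∀ t ≥ (0:ℝ), 0 ≤ w t)
    (hw_mono : MonotoneOn w (Set.Ici (0:ℝ)))
    (hw_cont : ContinuousOn w (Set.Ici (0:ℝ)))
    (hw_unbdd : ∀ B : ℝ, ∃ t ≥ (0:ℝ), B < w t)
    (hω : ∀ N : ℕ, ∃ M : ℕ, N ≤ M ∧ ∀ K : ℕ, M ≤ K →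
      ∃ θ C : ℝ, θ ∈ Set.Ioo (0:ℝ) 1 ∧ 1 < C ∧
        ∀ t ≥ (0:ℝ), (1 - θ) * w (N * t) + θ * w (K * t) ≤ w (M * t) + Real.log C) :
    ∃ C > (0:ℝ), ∃ A > (1:ℝ), ∀ t ≥ (0:ℝ), w (2 * t) ≤ C * w t + Real.log A :=
  stmt_0_general w hw_nonneg hω
end

section
/- If a weight function w satisfies both (α) (∃ C>0, A>1 with w(2t) ≤ C·w(t) + log A for all t ≥ 0) and (δ) (∃ C>0, A>1 with 2·w(t) ≤ w(Ct) + log A for all t ≥ 0), then the weight function system W_w = (w(Nt))_{N∈ℕ} satisfies condition (ω). -/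
/-!
Take `M ≥ C_δ N`, so that (δ) and monotonicity give `2 w(Nt) ≤ w(Mt) + log A_δ`. Iterating (α)
`K` times bounds `w(Kt) ≤ w(2^K Mt)` by `E w(Mt) + D`. With `θ = 1 / (2(E + 1))` the combination
`(1 - θ) w(Nt) + θ w(Kt)` is then at most `w(Mt) + log A_δ + D`.
-/

open Finset

lemma le_pow_mul_add_of_doubling {w : ℝ → ℝ} {C L : ℝ} (hC : 0 ≤ C)
    (hα : ∀ t ≥ (0:ℝ), w (2 * t) ≤ C * w t + L) (n : ℕ) {s : ℝ} (hs : 0 ≤ s) :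
    w (2 ^ n * s) ≤ C ^ n * w s + L * ∑ i ∈ range n, C ^ i := by
  induction n with
  | zero => simp
  | succ n ih =>
    calc w (2 ^ (n + 1) * s) = w (2 * (2 ^ n * s)) := by ring_nf
      _ ≤ C * w (2 ^ n * s) + L := hα _ (by positivity)
      _ ≤ C * (C ^ n * w s + L * ∑ i ∈ range n, C ^ i) + L := by gcongr
      _ = C ^ (n + 1) * w s + L * ∑ i ∈ range (n + 1), C ^ i := by
        rw [sum_range_succ']; simp only [pow_succ, ← sum_mul]; ring

lemma le_natCast_mul_of_doubling {w : ℝ → ℝ} (hw_mono : MonotoneOn w (Set.Ici 0)) {C L : ℝ}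
    (hC : 0 ≤ C) (hα : ∀ t ≥ (0:ℝ), w (2 * t) ≤ C * w t + L) (n : ℕ) {s : ℝ} (hs : 0 ≤ s) :
    w (n * s) ≤ C ^ n * w s + L * ∑ i ∈ range n, C ^ i := by
  have hn : (n : ℝ) ≤ 2 ^ n := by exact_mod_cast n.lt_two_pow_self.le
  calc w (n * s) ≤ w (2 ^ n * s) :=
        hw_mono (by simp only [Set.mem_Ici]; positivity) (by simp only [Set.mem_Ici]; positivity)
          (by gcongr)
    _ ≤ _ := le_pow_mul_add_of_doubling hC hα n hs

lemma two_mul_le_add_of_le {w : ℝ → ℝ} (hw_mono : MonotoneOn w (Set.Ici 0)) {C L : ℝ}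
    (hC : 0 ≤ C) (hδ : ∀ t ≥ (0:ℝ), 2 * w t ≤ w (C * t) + L) {s r : ℝ} (hs : 0 ≤ s)
    (hsr : C * s ≤ r) : 2 * w s ≤ w r + L := by
  have hCs : 0 ≤ C * s := mul_nonneg hC hs
  linarith [hδ s hs, hw_mono (Set.mem_Ici.mpr hCs) (Set.mem_Ici.mpr (hCs.trans hsr)) hsr]

lemma one_sub_mul_add_mul_le {x y z a D E : ℝ} (hx : 0 ≤ x) (hz : 0 ≤ z) (ha : 0 ≤ a)
    (hD : 0 ≤ D) (hE : 0 ≤ E) (hxz : 2 * x ≤ z + a) (hyz : y ≤ E * z + D) :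
    (1 - 1 / (2 * (E + 1))) * x + 1 / (2 * (E + 1)) * y ≤ z + (a + D) := by
  set θ := 1 / (2 * (E + 1)) with hθ
  have hθ_pos : 0 < θ := by positivity
  have hθ_le : θ ≤ 1 / 2 := by rw [hθ]; gcongr; linarith
  have hθE : θ * E ≤ 1 / 2 := by
    rw [hθ, div_mul_eq_mul_div, one_mul, div_le_iff₀ (by positivity)]; linarith
  nlinarith [mul_le_mul_of_nonneg_left hyz hθ_pos.le, mul_nonneg hθ_pos.le hx,
    mul_le_mul_of_nonneg_right hθE hz, mul_le_mul_of_nonneg_right hθ_le hD]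

theorem stmt_2_general (w : ℝ → ℝ)
    (hw_nonneg : ∀ t ≥ (0:ℝ), 0 ≤ w t)
    (hw_mono : MonotoneOn w (Set.Ici (0:ℝ)))
    (hα : ∃ C > (0:ℝ), ∃ A > (1:ℝ), ∀ t ≥ (0:ℝ), w (2 * t) ≤ C * w t + Real.log A)
    (hδ : ∃ C > (0:ℝ), ∃ A > (1:ℝ), ∀ t ≥ (0:ℝ), 2 * w t ≤ w (C * t) + Real.log A) :
    ∀ N : ℕ, ∃ M : ℕ, N ≤ M ∧ ∀ K : ℕ, M ≤ K →
      ∃ θ C : ℝ, θ ∈ Set.Ioo (0:ℝ) 1 ∧ 1 < C ∧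
        ∀ t ≥ (0:ℝ), (1 - θ) * w (N * t) + θ * w (K * t) ≤ w (M * t) + Real.log C := by
  obtain ⟨Cα, hCα, Aα, hAα, hα⟩ := hα
  obtain ⟨Cδ, hCδ, Aδ, hAδ, hδ⟩ := hδ
  intro N
  refine ⟨N + ⌈Cδ * N⌉₊ + 1, by omega, fun K hK => ?_⟩
  set M := N + ⌈Cδ * N⌉₊ + 1
  set E := Cα ^ K
  set D := Real.log Aα * ∑ i ∈ range K, Cα ^ i
  have hE : 0 ≤ E := by positivity
  have hD : 0 ≤ D := mul_nonneg (Real.log_nonneg hAα.le) (by positivity)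
  have hlogAδ : 0 < Real.log Aδ := Real.log_pos hAδ
  have hCδM : Cδ * N ≤ M := by
    have := Nat.le_ceil (Cδ * N); push_cast [M]; linarith [Nat.cast_nonneg (α := ℝ) N]
  refine ⟨1 / (2 * (E + 1)), Real.exp (Real.log Aδ + D),
    ⟨by positivity, by rw [div_lt_one (by positivity)]; linarith⟩,
    Real.one_lt_exp_iff.mpr (by positivity), fun t ht => ?_⟩
  rw [Real.log_exp]
  have hM1 : (1 : ℝ) ≤ M := by exact_mod_cast Nat.le_add_left 1 _
  have hN_M : 2 * w (N * t) ≤ w (M * t) + Real.log Aδ :=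
    two_mul_le_add_of_le hw_mono hCδ.le hδ (by positivity) (by rw [← mul_assoc]; gcongr)
  have hK_M : w (K * t) ≤ E * w (M * t) + D :=
    (hw_mono (by simp only [Set.mem_Ici]; positivity) (by simp only [Set.mem_Ici]; positivity)
      (by gcongr; exact le_mul_of_one_le_left ht hM1)).trans
      (le_natCast_mul_of_doubling hw_mono hCα.le hα K (by positivity))
  exact one_sub_mul_add_mul_le (hw_nonneg _ (by positivity)) (hw_nonneg _ (by positivity))
    hlogAδ.le hD hE hN_M hK_M

/-- If a weight function `w` satisfies (α) and (δ), then the weight function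
system `W_w = (w(N·t))` satisfies condition (ω). -/
theorem stmt_2 (w : ℝ → ℝ)
    (hw_nonneg : ∀ t ≥ (0:ℝ), 0 ≤ w t)
    (hw_mono : MonotoneOn w (Set.Ici (0:ℝ)))
    (hw_cont : ContinuousOn w (Set.Ici (0:ℝ)))
    (hw_unbdd : ∀ B : ℝ, ∃ t ≥ (0:ℝ), B < w t)
    (hα : ∃ C > (0:ℝ), ∃ A > (1:ℝ), ∀ t ≥ (0:ℝ), w (2 * t) ≤ C * w t + Real.log A)
    (hδ : ∃ C > (0:ℝ), ∃ A > (1:ℝ), ∀ t ≥ (0:ℝ), 2 * w t ≤ w (C * t) + Real.log A) :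
    ∀ N : ℕ, ∃ M : ℕ, N ≤ M ∧ ∀ K : ℕ, M ≤ K →
      ∃ θ C : ℝ, θ ∈ Set.Ioo (0:ℝ) 1 ∧ 1 < C ∧
        ∀ t ≥ (0:ℝ), (1 - θ) * w (N * t) + θ * w (K * t) ≤ w (M * t) + Real.log C :=
  stmt_2_general w hw_nonneg hw_mono hα hδ
end

section
/- Generalized three-sets Hadamard theorem: let Ω₁, Ω₂, Ω₃ be relatively compact open subsets of ℂ with Ω₁ nonempty, Ω₁ ⊆ Ω₂, closure(Ω₂) ⊆ Ω₃, and Ω₃ simply connected. Then there exists θ ∈ (0,1) such that for every holomorphic function f on Ω₃, sup_{z∈Ω₂} |f(z)| ≤ (sup_{z∈Ω₁} |f(z)|)^θ · (sup_{z∈Ω₃} |f(z)|)^{1−θ}. -/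
/-!
Call `z ∈ Ω₃` good if, for some `θ ∈ (0, 1]`, every holomorphic `f` on `Ω₃` with `|f| ≤ m` on `Ω₁`
and `|f| ≤ M` on `Ω₃` satisfies `|f| ≤ m ^ θ * M ^ (1 - θ)` near `z`. Points of `Ω₁` are good with
`θ = 1`, and good points form an open set. If `z ∈ Ω₃` is a limit of good points, take a good `x`
very close to `z`: the bound holds on a small circle around `x`, and Hadamard's three-circles
theorem on a disc around `x` that still lies in `Ω₃` and contains a neighbourhood of `z` makes `z`
good, with `θ` multiplied by a fixed factor. Hence every point of the connected set `Ω₃` is good,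
and the compactness of `closure Ω₂` turns the local exponents into a uniform one.
-/

open Real Set Metric Filter Topology Complex.HadamardThreeLines

section Suprema

variable {α : Type*} {S : Set α} {g : α → ℝ}

lemma le_biSup_of_bddAbove_image (hB : BddAbove (g '' S)) {z : α} (hz : z ∈ S) :
    g z ≤ ⨆ z ∈ S, g z :=
  have hU : (⋃ z, range fun (_ : z ∈ S) => g z) = g '' S := by ext; simp
  le_ciSup₂ (f := fun z (_ : z ∈ S) => g z) (hU ▸ hB) z hz

lemma biSup_le_of_nonneg {C : ℝ} (hC : 0 ≤ C) (h : ∀ z ∈ S, g z ≤ C) : ⨆ z ∈ S, g z ≤ C :=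
  Real.iSup_le (fun z => Real.iSup_le (h z) hC) hC

lemma biSup_nonneg (hg : ∀ z, 0 ≤ g z) : 0 ≤ ⨆ z ∈ S, g z :=
  Real.iSup_nonneg fun z => Real.iSup_nonneg fun _ => hg z

end Suprema

lemma rpow_mul_rpow_one_sub_le {m M t t' : ℝ} (hm : 0 ≤ m) (hmM : m ≤ M) (ht : 0 ≤ t)
    (htt' : t ≤ t') (ht' : t' ≤ 1) : m ^ t' * M ^ (1 - t') ≤ m ^ t * M ^ (1 - t) := by
  rcases hm.eq_or_lt with rfl | hm
  · rcases (ht.trans htt').eq_or_lt with ht'0 | ht'0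
    · obtain rfl : t = t' := le_antisymm htt' (ht'0 ▸ ht)
      rfl
    · rw [Real.zero_rpow ht'0.ne', zero_mul]
      positivity
  have hM : 0 < M := hm.trans_le hmM
  calc m ^ t' * M ^ (1 - t') = m ^ t * m ^ (t' - t) * M ^ (1 - t') := by
        rw [← Real.rpow_add hm, add_sub_cancel]
    _ ≤ m ^ t * M ^ (t' - t) * M ^ (1 - t') := by
        gcongr
    _ = m ^ t * M ^ (1 - t) := by
        rw [mul_assoc, ← Real.rpow_add hM]
        ring_nf

section ThreeCircles

variable {f : ℂ → ℂ} {a z : ℂ} {r ρ R m M : ℝ}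

/-- Hadamard's three-circles theorem, from the three-lines theorem on the strip
`0 ≤ re w ≤ log (R / r)`, which `w ↦ a + R exp (-w)` maps onto the annulus. -/
theorem norm_le_of_mem_annulus (hr : 0 < r) (hrR : r < R) (hf : DiffContOnCl ℂ f (ball a R))
    (hm : ∀ w ∈ sphere a r, ‖f w‖ ≤ m) (hM : ∀ w ∈ sphere a R, ‖f w‖ ≤ M)
    (hrz : r ≤ dist z a) (hzR : dist z a ≤ R) :
    ‖f z‖ ≤
      M ^ (1 - log (R / dist z a) / log (R / r)) * m ^ (log (R / dist z a) / log (R / r)) := by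
  have hR : 0 < R := hr.trans hrR
  have hs : 0 < log (R / r) := Real.log_pos ((one_lt_div hr).2 hrR)
  set φ : ℂ → ℂ := fun w => a + R * Complex.exp (-w)
  have hdist (w : ℂ) : dist (φ w) a = R * exp (-w.re) := by
    simp [φ, Complex.norm_exp, abs_of_pos hR]
  have hmaps : MapsTo φ (verticalStrip 0 (log (R / r))) (ball a R) :=
    fun w hw => by
      rw [mem_ball, hdist]
      exact mul_lt_of_lt_one_right hR (Real.exp_lt_one_iff.2 (by linarith [hw.1]))
  have hmapsCl : MapsTo φ (verticalClosedStrip 0 (log (R / r))) (closedBall a R) :=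
    fun w hw => by
      rw [mem_closedBall, hdist]
      exact mul_le_of_le_one_right hR.le (Real.exp_le_one_iff.2 (by linarith [hw.1]))
  have hfc : ContinuousOn f (closedBall a R) := closure_ball a hR.ne' ▸ hf.continuousOn
  have hB : BddAbove ((norm ∘ (f ∘ φ)) '' verticalClosedStrip 0 (log (R / r))) :=
    ((isCompact_closedBall a R).bddAbove_image (continuous_norm.comp_continuousOn hfc)).mono
      (by rintro _ ⟨w, hw, rfl⟩; exact ⟨φ w, hmapsCl hw, rfl⟩)
  have hza : z - a ≠ 0 := sub_ne_zero.2 (dist_pos.1 (hr.trans_le hrz))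
  set w₀ := -Complex.log ((z - a) / R)
  have hφw₀ : φ w₀ = z := by
    simp only [φ, w₀, neg_neg]
    have hR' : (R : ℂ) ≠ 0 := by exact_mod_cast hR.ne'
    rw [Complex.exp_log (div_ne_zero hza hR'), mul_div_cancel₀ _ hR', add_sub_cancel]
  have hre : w₀.re = log (R / dist z a) := by
    simp only [w₀, Complex.neg_re, Complex.log_re, norm_div, Complex.norm_real, Real.norm_eq_abs,
      abs_of_pos hR, Complex.dist_eq]
    rw [← Real.log_inv, inv_div]
  have := norm_le_interp_of_mem_verticalClosedStrip' (a := M) (b := m) hs (z := w₀) ?_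
    (hf.comp (by fun_prop : Differentiable ℂ φ).diffContOnCl hmaps) hB ?_ ?_
  · rwa [Function.comp_apply, hφw₀, hre, sub_zero, sub_zero] at this
  · rw [verticalClosedStrip, mem_preimage, hre]
    exact ⟨Real.log_nonneg ((one_le_div₀ (hr.trans_le hrz)).2 hzR),
      Real.log_le_log (div_pos hR (hr.trans_le hrz)) (by gcongr)⟩
  · intro w (hw : w.re = 0)
    exact hM _ (by rw [mem_sphere, hdist, hw, neg_zero, Real.exp_zero, mul_one])
  · intro w (hw : w.re = log (R / r))
    refine hm _ ?_
    rw [mem_sphere, hdist, hw, Real.exp_neg, Real.exp_log (div_pos hR hr)]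
    field_simp

lemma log_div_div_log_div_mem_Icc (hr : 0 < r) (hrρ : r ≤ ρ) (hρR : ρ ≤ R) :
    log (R / ρ) / log (R / r) ∈ Icc (0 : ℝ) 1 :=
  have hρ : 0 < ρ := hr.trans_le hrρ
  have hR : 0 < R := hρ.trans_le hρR
  have hs : 0 ≤ log (R / r) := Real.log_nonneg ((one_le_div₀ hr).2 (hrρ.trans hρR))
  ⟨div_nonneg (Real.log_nonneg ((one_le_div₀ hρ).2 hρR)) hs,
    div_le_one_of_le₀ (Real.log_le_log (by positivity) (by gcongr)) hs⟩

theorem norm_le_rpow_mul_rpow_of_mem_closedBall (hr : 0 < r) (hrρ : r ≤ ρ) (hρR : ρ ≤ R)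
    (hrR : r < R) (hf : DiffContOnCl ℂ f (ball a R)) (hm : ∀ w ∈ sphere a r, ‖f w‖ ≤ m)
    (hM : ∀ w ∈ sphere a R, ‖f w‖ ≤ M) (hm0 : 0 ≤ m) (hmM : m ≤ M) (hz : z ∈ closedBall a ρ) :
    ‖f z‖ ≤ m ^ (log (R / ρ) / log (R / r)) * M ^ (1 - log (R / ρ) / log (R / r)) := by
  have hR : 0 < R := hr.trans hrR
  have ht := log_div_div_log_div_mem_Icc hr hrρ hρR
  rcases le_or_gt (dist z a) r with hzr | hrz
  · have hfm : ‖f z‖ ≤ m :=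
      Complex.norm_le_of_forall_mem_frontier_norm_le isBounded_ball
        (hf.mono (ball_subset_ball hrR.le)) (fun w hw => hm w (frontier_ball a hr.ne' ▸ hw))
        (closure_ball a hr.ne' ▸ mem_closedBall.2 hzr)
    calc ‖f z‖ ≤ m ^ (1 : ℝ) * M ^ (1 - 1 : ℝ) := by simpa using hfm
      _ ≤ _ := rpow_mul_rpow_one_sub_le hm0 hmM ht.1 ht.2 le_rfl
  · have hzρ : dist z a ≤ ρ := mem_closedBall.1 hz
    have hza : 0 < dist z a := hr.trans hrz
    have hρ : 0 < ρ := hza.trans_le hzρ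
    calc ‖f z‖
        ≤ M ^ (1 - log (R / dist z a) / log (R / r)) * m ^ (log (R / dist z a) / log (R / r)) :=
          norm_le_of_mem_annulus hr hrR hf hm hM hrz.le (hzρ.trans hρR)
      _ = m ^ (log (R / dist z a) / log (R / r)) * M ^ (1 - log (R / dist z a) / log (R / r)) :=
          mul_comm _ _
      _ ≤ _ := rpow_mul_rpow_one_sub_le hm0 hmM ht.1
          (div_le_div_of_nonneg_right (Real.log_le_log (by positivity) (by gcongr))
            (Real.log_nonneg ((one_le_div₀ hr).2 hrR.le)))
          (log_div_div_log_div_mem_Icc hr hrz.le (hzρ.trans hρR)).2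

end ThreeCircles

section ThreeSets

variable {Ω₁ Ω₃ : Set ℂ}

/-- Arbitrary bounds `m`, `M` stand in for the suprema over `Ω₁` and `Ω₃`, whose values are junk
for unbounded `f`. -/
def ThreeSetsBound (Ω₁ Ω₃ : Set ℂ) (θ : ℝ) (w : ℂ) : Prop :=
  ∀ (f : ℂ → ℂ) (m M : ℝ), DifferentiableOn ℂ f Ω₃ → (∀ z ∈ Ω₁, ‖f z‖ ≤ m) →
    (∀ z ∈ Ω₃, ‖f z‖ ≤ M) → 0 ≤ m → m ≤ M → ‖f w‖ ≤ m ^ θ * M ^ (1 - θ)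

lemma ThreeSetsBound.anti {θ θ' : ℝ} {w : ℂ} (h : ThreeSetsBound Ω₁ Ω₃ θ' w) (hθ : 0 ≤ θ)
    (hθθ' : θ ≤ θ') (hθ' : θ' ≤ 1) : ThreeSetsBound Ω₁ Ω₃ θ w :=
  fun f m M hf hm hM hm0 hmM =>
    (h f m M hf hm hM hm0 hmM).trans (rpow_mul_rpow_one_sub_le hm0 hmM hθ hθθ' hθ')

lemma threeSetsBound_one {w : ℂ} (hw : w ∈ Ω₁) : ThreeSetsBound Ω₁ Ω₃ 1 w :=
  fun f _ _ _ hm _ _ _ => by simpa using hm w hw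

lemma threeSetsBound_of_sphere {a z : ℂ} {θ r ρ R : ℝ} (hθ0 : 0 ≤ θ) (hθ1 : θ ≤ 1) (hr : 0 < r)
    (hrρ : r ≤ ρ) (hρR : ρ ≤ R) (hrR : r < R) (hΩ₃ : closedBall a R ⊆ Ω₃)
    (h : ∀ w ∈ sphere a r, ThreeSetsBound Ω₁ Ω₃ θ w) (hz : z ∈ closedBall a ρ) :
    ThreeSetsBound Ω₁ Ω₃ (θ * (log (R / ρ) / log (R / r))) z := by
  intro f m M hf hm hM hm0 hmM
  set t := log (R / ρ) / log (R / r)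
  have hM0 : 0 ≤ M := hm0.trans hmM
  obtain ⟨ht0, ht1⟩ : t ∈ Icc 0 1 := log_div_div_log_div_mem_Icc hr hrρ hρR
  have hm'M : m ^ θ * M ^ (1 - θ) ≤ M := by
    simpa using rpow_mul_rpow_one_sub_le hm0 hmM le_rfl hθ0 hθ1
  calc ‖f z‖ ≤ (m ^ θ * M ^ (1 - θ)) ^ t * M ^ (1 - t) :=
        norm_le_rpow_mul_rpow_of_mem_closedBall hr hrρ hρR hrR (hf.diffContOnCl_ball hΩ₃)
          (fun w hw => h w hw f m M hf hm hM hm0 hmM)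
          (fun w hw => hM w (hΩ₃ (sphere_subset_closedBall hw))) (by positivity) hm'M hz
    _ = m ^ (θ * t) * M ^ (1 - θ * t) := by
      rw [Real.mul_rpow (by positivity) (by positivity), ← Real.rpow_mul hm0,
        ← Real.rpow_mul hM0, mul_assoc, ← Real.rpow_add_of_nonneg hM0
        (mul_nonneg (sub_nonneg.2 hθ1) ht0) (sub_nonneg.2 ht1)]
      ring_nf

def threeSetsLocus (Ω₁ Ω₃ : Set ℂ) : Set ℂ :=
  {z | ∃ θ ∈ Ioc (0 : ℝ) 1, ∀ᶠ w in 𝓝 z, ThreeSetsBound Ω₁ Ω₃ θ w}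

lemma isOpen_threeSetsLocus : IsOpen (threeSetsLocus Ω₁ Ω₃) :=
  isOpen_iff_mem_nhds.2 fun _ ⟨θ, hθ, h⟩ => h.eventually_nhds.mono fun _ hy => ⟨θ, hθ, hy⟩

lemma subset_threeSetsLocus (h₁ : IsOpen Ω₁) : Ω₁ ⊆ threeSetsLocus Ω₁ Ω₃ :=
  fun _ hz => ⟨1, ⟨one_pos, le_rfl⟩, eventually_of_mem (h₁.mem_nhds hz) fun _ => threeSetsBound_one⟩

lemma mem_threeSetsLocus_of_mem_closure (hΩ₃ : IsOpen Ω₃) {z : ℂ} (hz : z ∈ Ω₃)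
    (hcl : z ∈ closure (threeSetsLocus Ω₁ Ω₃)) : z ∈ threeSetsLocus Ω₁ Ω₃ := by
  obtain ⟨R₀, hR₀, hball⟩ := nhds_basis_closedBall.mem_iff.1 (hΩ₃.mem_nhds hz)
  obtain ⟨x, ⟨θ, hθ, hx⟩, hzx⟩ := Metric.mem_closure_iff.1 hcl (R₀ / 4) (by positivity)
  obtain ⟨δ, hδ, hxδ⟩ := Metric.eventually_nhds_iff_ball.1 hx
  -- three circles about `x` with radii `r < R₀ / 2 < 3 R₀ / 4`: the outer disc stays in
  -- `closedBall z R₀`, the middle one contains `ball z (R₀ / 4)`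
  set r := min (δ / 2) (R₀ / 4)
  have hr : 0 < r := by positivity
  have hrR₀ : r ≤ R₀ / 4 := min_le_right _ _
  have hs : 0 < log (3 * R₀ / 4 / r) := Real.log_pos ((one_lt_div hr).2 (by linarith))
  have ht : 0 < log (3 * R₀ / 4 / (R₀ / 2)) :=
    Real.log_pos ((one_lt_div (by positivity)).2 (by linarith))
  refine ⟨θ * (log (3 * R₀ / 4 / (R₀ / 2)) / log (3 * R₀ / 4 / r)),
    ⟨mul_pos hθ.1 (div_pos ht hs), mul_le_one₀ hθ.2 (div_pos ht hs).le
      (div_le_one_of_le₀ (Real.log_le_log (by positivity) (by gcongr; linarith)) hs.le)⟩, ?_⟩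
  filter_upwards [ball_mem_nhds z (by positivity : 0 < R₀ / 4)] with w hw
  refine threeSetsBound_of_sphere (a := x) hθ.1.le hθ.2 hr (by linarith) (by linarith) (by linarith)
    (fun y hy => hball ?_) (fun y hy => hxδ y ?_) ?_
  · rw [mem_closedBall] at hy ⊢
    linarith [dist_triangle y x z, dist_comm z x]
  · rw [mem_sphere] at hy
    rw [mem_ball, hy]
    linarith [min_le_left (δ / 2) (R₀ / 4)]
  · rw [mem_ball] at hw
    rw [mem_closedBall]
    linarith [dist_triangle w z x]

lemma IsPreconnected.subset_threeSetsLocus (hconn : IsPreconnected Ω₃) (hΩ₃ : IsOpen Ω₃)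
    (h₁ : IsOpen Ω₁) (hne : Ω₁.Nonempty) (h₁₃ : Ω₁ ⊆ Ω₃) : Ω₃ ⊆ threeSetsLocus Ω₁ Ω₃ :=
  hconn.subset_of_closure_inter_subset isOpen_threeSetsLocus
    (hne.mono (subset_inter h₁₃ (_root_.subset_threeSetsLocus h₁)))
    fun _ ⟨hcl, hz⟩ => mem_threeSetsLocus_of_mem_closure hΩ₃ hz hcl

lemma IsCompact.exists_threeSetsBound {K : Set ℂ} (hK : IsCompact K)
    (hKA : K ⊆ threeSetsLocus Ω₁ Ω₃) :
    ∃ θ ∈ Ioo (0 : ℝ) 1, ∀ w ∈ K, ThreeSetsBound Ω₁ Ω₃ θ w := by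
  set U : ℕ → Set ℂ := fun n => {x | ∀ᶠ w in 𝓝 x, ThreeSetsBound Ω₁ Ω₃ (1 / (n + 2)) w}
  have hU_open (n : ℕ) : IsOpen (U n) := isOpen_iff_mem_nhds.2 fun _ h => h.eventually_nhds
  have hU_mono : Monotone U := fun n n' hnn' x hx =>
    hx.mono fun w hw =>
      hw.anti (by positivity) (by gcongr) ((div_le_one (by positivity)).2 (by linarith))
  have hKU : K ⊆ ⋃ n, U n := fun x hx => by
    obtain ⟨θ, hθ, h⟩ := hKA hx
    obtain ⟨n, hn⟩ := exists_nat_one_div_lt hθ.1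
    have : 1 / ((n : ℝ) + 2) ≤ 1 / (n + 1) := by gcongr; linarith
    exact mem_iUnion.2 ⟨n, h.mono fun w hw => hw.anti (by positivity) (by linarith) hθ.2⟩
  obtain ⟨n, hn⟩ := hK.elim_directed_cover U hU_open hKU hU_mono.directed_le
  exact ⟨1 / (n + 2), ⟨by positivity, (div_lt_one (by positivity)).2 (by linarith)⟩,
    fun w hw => (hn hw).self_of_nhds⟩

end ThreeSets

theorem stmt_7_general (Ω₁ Ω₂ Ω₃ : Set ℂ)
    (h₁open : IsOpen Ω₁) (h₃open : IsOpen Ω₃)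
    (h₂bdd : Bornology.IsBounded Ω₂)
    (h₁ne : Ω₁.Nonempty) (h₁₂ : Ω₁ ⊆ Ω₂) (h₂₃ : closure Ω₂ ⊆ Ω₃)
    (h₃sc : SimplyConnectedSpace Ω₃) :
    ∃ θ ∈ Set.Ioo (0:ℝ) 1, ∀ f : ℂ → ℂ, DifferentiableOn ℂ f Ω₃ →
      (BddAbove ((fun z => ‖f z‖) '' Ω₃)) →
      (⨆ z ∈ Ω₂, ‖f z‖) ≤ (⨆ z ∈ Ω₁, ‖f z‖) ^ θ * (⨆ z ∈ Ω₃, ‖f z‖) ^ (1 - θ) := by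
  have h₁₃ : Ω₁ ⊆ Ω₃ := h₁₂.trans (subset_closure.trans h₂₃)
  have hconn : IsPreconnected Ω₃ := (isConnected_iff_connectedSpace.2 inferInstance).isPreconnected
  obtain ⟨θ, hθ, hbound⟩ := h₂bdd.isCompact_closure.exists_threeSetsBound
    (h₂₃.trans (hconn.subset_threeSetsLocus h₃open h₁open h₁ne h₁₃))
  refine ⟨θ, hθ, fun f hf hB => ?_⟩
  have hM : ∀ z ∈ Ω₃, ‖f z‖ ≤ ⨆ z ∈ Ω₃, ‖f z‖ := fun z => le_biSup_of_bddAbove_image hB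
  have hm : ∀ z ∈ Ω₁, ‖f z‖ ≤ ⨆ z ∈ Ω₁, ‖f z‖ :=
    fun z => le_biSup_of_bddAbove_image (hB.mono (image_mono h₁₃))
  have hm0 : 0 ≤ ⨆ z ∈ Ω₁, ‖f z‖ := biSup_nonneg fun _ => norm_nonneg _
  have hM0 : 0 ≤ ⨆ z ∈ Ω₃, ‖f z‖ := biSup_nonneg fun _ => norm_nonneg _
  have hmM : (⨆ z ∈ Ω₁, ‖f z‖) ≤ ⨆ z ∈ Ω₃, ‖f z‖ :=
    biSup_le_of_nonneg hM0 fun z hz => hM z (h₁₃ hz)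
  exact biSup_le_of_nonneg (by positivity)
    fun z hz => hbound z (subset_closure hz) f _ _ hf hm hM hm0 hmM

/-- Generalized three-sets Hadamard theorem. -/
theorem stmt_7 (Ω₁ Ω₂ Ω₃ : Set ℂ)
    (h₁open : IsOpen Ω₁) (h₂open : IsOpen Ω₂) (h₃open : IsOpen Ω₃)
    (h₁bdd : Bornology.IsBounded Ω₁) (h₂bdd : Bornology.IsBounded Ω₂)
    (h₃bdd : Bornology.IsBounded Ω₃)
    (h₁ne : Ω₁.Nonempty) (h₁₂ : Ω₁ ⊆ Ω₂) (h₂₃ : closure Ω₂ ⊆ Ω₃)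
    (h₃sc : SimplyConnectedSpace Ω₃) :
    ∃ θ ∈ Set.Ioo (0:ℝ) 1, ∀ f : ℂ → ℂ, DifferentiableOn ℂ f Ω₃ →
      (BddAbove ((fun z => ‖f z‖) '' Ω₃)) →
      (⨆ z ∈ Ω₂, ‖f z‖) ≤ (⨆ z ∈ Ω₁, ‖f z‖) ^ θ * (⨆ z ∈ Ω₃, ‖f z‖) ^ (1 - θ) :=
  stmt_7_general Ω₁ Ω₂ Ω₃ h₁open h₃open h₂bdd h₁ne h₁₂ h₂₃ h₃sc
end

section
/- Let w be a weight function satisfying (δ): there exist C > 0 and A > 1 with 2·w(t) ≤ w(Ct) + log A for all t ≥ 0. Then the weight function system W_w = (w(Nt))_{N∈ℕ} satisfies (N): for every N there exists M ≥ N with ∫₀^∞ e^{w(Nt) − w(Mt)} dt < ∞. -/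
/-!
Put `v = w - log A`, so that (δ) reads `2 v(t) ≤ v(C t)`. Iterating from a point `t₀` with
`v(t₀) > 0` gives `v(Cᵏ t₀) ≥ 2ᵏ v(t₀)`, so `w` grows faster than any multiple of `log t`; in
particular `e^{-w(t)} ≤ t⁻²` eventually and `e^{-w}` is integrable on `(0, ∞)`. For `N ≥ 1` and
`M ≥ C N`, (δ) at `N t` and monotonicity give `w(N t) - w(M t) ≤ log A - w(N t) ≤ log A - w(t)`.
-/

open MeasureTheory Real Set Filter Asymptotics

lemma two_pow_mul_le_of_two_mul_le {v : ℝ → ℝ} {C : ℝ} (hC : 0 ≤ C)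
    (hv : ∀ t ≥ 0, 2 * v t ≤ v (C * t)) {t : ℝ} (ht : 0 ≤ t) (k : ℕ) :
    2 ^ k * v t ≤ v (C ^ k * t) := by
  induction k with
  | zero => simp
  | succ k ih =>
    calc 2 ^ (k + 1) * v t = 2 * (2 ^ k * v t) := by ring
      _ ≤ 2 * v (C ^ k * t) := by linarith
      _ ≤ v (C * (C ^ k * t)) := hv _ (by positivity)
      _ = v (C ^ (k + 1) * t) := by ring_nf

lemma div_log_mul_log_le_of_two_mul_le {v : ℝ → ℝ} (hv_mono : MonotoneOn v (Ici 0)) {C : ℝ}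
    (hC : 1 < C) (hv : ∀ t ≥ 0, 2 * v t ≤ v (C * t)) {t₀ t : ℝ} (ht₀ : 0 < t₀)
    (hvt₀ : 0 ≤ v t₀) (ht : t₀ ≤ t) :
    v t₀ / log C * log (t / t₀) ≤ v t := by
  obtain ⟨k, hk_le, hk_lt⟩ := exists_nat_pow_near ((one_le_div ht₀).2 ht) hC
  have hlogC : 0 < log C := log_pos hC
  have hlog : log (t / t₀) ≤ (k + 1) * log C := by
    rw [← Nat.cast_succ, ← log_pow]
    exact log_le_log (div_pos (ht₀.trans_le ht) ht₀) hk_lt.le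
  calc v t₀ / log C * log (t / t₀) ≤ v t₀ / log C * ((k + 1) * log C) := by gcongr
    _ = (k + 1) * v t₀ := by field_simp
    _ ≤ 2 ^ k * v t₀ := by
        gcongr
        exact_mod_cast Nat.lt_two_pow_self
    _ ≤ v (C ^ k * t₀) := two_pow_mul_le_of_two_mul_le (by linarith) hv ht₀.le k
    _ ≤ v t := hv_mono (by simp; positivity) (by simp; linarith)
        ((le_div_iff₀ ht₀).1 hk_le)

lemma eventually_mul_log_le_of_two_mul_le {v : ℝ → ℝ} (hv_mono : MonotoneOn v (Ici 0)) {C : ℝ}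
    (hC : 1 < C) (hv : ∀ t ≥ 0, 2 * v t ≤ v (C * t)) (hv_unbdd : ∀ B : ℝ, ∃ t ≥ 0, B < v t)
    (c : ℝ) : ∀ᶠ t in atTop, c * log t ≤ v t := by
  have hlogC : 0 < log C := log_pos hC
  obtain ⟨t₁, ht₁, hvt₁⟩ := hv_unbdd (|c| * log C)
  set t₀ := max t₁ 1
  have ht₀ : 0 < t₀ := lt_max_of_lt_right one_pos
  have hvt₀ : |c| * log C < v t₀ :=
    hvt₁.trans_le (hv_mono ht₁ (mem_Ici.2 ht₀.le) (le_max_left _ _))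
  set β := v t₀ / log C
  have hβ : |c| < β := (lt_div_iff₀ hlogC).2 hvt₀
  have hcβ : 0 < β - c := by linarith [le_abs_self c]
  filter_upwards [eventually_ge_atTop t₀,
    tendsto_log_atTop.eventually_ge_atTop (β * log t₀ / (β - c))] with t ht hlogt
  have key := div_log_mul_log_le_of_two_mul_le hv_mono hC hv ht₀
    (by nlinarith [abs_nonneg c]) ht
  rw [log_div (by linarith) ht₀.ne'] at key
  rw [div_le_iff₀ hcβ] at hlogt
  nlinarith

lemma integrableOn_exp_neg_of_eventually_two_mul_log_le {f : ℝ → ℝ}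
    (hf : ContinuousOn f (Ici 0)) (hlog : ∀ᶠ t in atTop, 2 * log t ≤ f t) :
    IntegrableOn (fun t => exp (-f t)) (Ioi 0) := by
  have hloc : LocallyIntegrableOn (fun t => exp (-f t)) (Ici 0) :=
    (continuous_exp.comp_continuousOn hf.neg).locallyIntegrableOn measurableSet_Ici
  have hbigO : (fun t => exp (-f t)) =O[atTop] fun t : ℝ => t ^ (-2 : ℝ) := by
    refine IsBigO.of_bound 1 ?_
    filter_upwards [hlog, eventually_gt_atTop 0] with t ht htpos
    rw [one_mul, norm_of_nonneg (exp_pos _).le, norm_of_nonneg (by positivity),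
      rpow_def_of_pos htpos]
    exact exp_le_exp.2 (by linarith)
  exact (hloc.integrableOn_of_isBigO_atTop hbigO
    (integrableAtFilter_rpow_atTop_iff.2 (by norm_num))).mono_set Ioi_subset_Ici_self

lemma integrableOn_exp_neg_of_two_mul_le_add {w : ℝ → ℝ} (hw_mono : MonotoneOn w (Ici 0))
    (hw_cont : ContinuousOn w (Ici 0)) (hw_unbdd : ∀ B : ℝ, ∃ t ≥ 0, B < w t) {C b : ℝ}
    (hC : 0 ≤ C) (hδ : ∀ t ≥ 0, 2 * w t ≤ w (C * t) + b) :
    IntegrableOn (fun t => exp (-w t)) (Ioi 0) := by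
  -- Enlarging `C` and `b` keeps the inequality (by monotonicity) and makes `C > 1`, `b ≥ 0`.
  set C' := max C 2
  set b' := max b 0
  have hv_mono : MonotoneOn (fun t => w t - b') (Ici 0) :=
    fun x hx y hy hxy => sub_le_sub_right (hw_mono hx hy hxy) b'
  have hv : ∀ t ≥ 0, 2 * (w t - b') ≤ w (C' * t) - b' := by
    intro t ht
    have hCC' : w (C * t) ≤ w (C' * t) :=
      hw_mono (mem_Ici.2 (by positivity)) (mem_Ici.2 (by positivity))
        (mul_le_mul_of_nonneg_right (le_max_left _ _) ht)
    linarith [hδ t ht, le_max_left b 0]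
  have hv_unbdd : ∀ B : ℝ, ∃ t ≥ 0, B < w t - b' := fun B =>
    (hw_unbdd (B + b')).imp fun t ⟨ht, hBt⟩ => ⟨ht, by linarith⟩
  refine integrableOn_exp_neg_of_eventually_two_mul_log_le hw_cont ?_
  filter_upwards [eventually_mul_log_le_of_two_mul_le hv_mono
    (lt_max_of_lt_right one_lt_two) hv hv_unbdd 2] with t ht
  linarith [le_max_right b 0]

lemma integrableOn_exp_of_le_sub {w g : ℝ → ℝ} (hw : IntegrableOn (fun t => exp (-w t)) (Ioi 0))
    (hg : ContinuousOn g (Ioi 0)) (K : ℝ) (hgw : ∀ t > 0, g t ≤ K - w t) :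
    IntegrableOn (fun t => exp (g t)) (Ioi 0) := by
  refine (hw.const_mul (exp K)).mono'
    ((continuous_exp.comp_continuousOn hg).aestronglyMeasurable measurableSet_Ioi) ?_
  filter_upwards [ae_restrict_mem measurableSet_Ioi] with t ht
  rw [norm_of_nonneg (exp_pos _).le, ← exp_add, ← sub_eq_add_neg]
  exact exp_le_exp.2 (hgw t ht)

lemma ContinuousOn.comp_const_mul_Ici {w : ℝ → ℝ} (hw : ContinuousOn w (Ici 0)) {a : ℝ}
    (ha : 0 ≤ a) : ContinuousOn (fun t => w (a * t)) (Ici 0) :=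
  hw.comp (continuous_const.mul continuous_id).continuousOn
    fun _ ht => mem_Ici.2 (mul_nonneg ha ht)

lemma sub_le_sub_of_two_mul_le_add {w : ℝ → ℝ} (hw_mono : MonotoneOn w (Ici 0)) {C b : ℝ}
    (hC : 0 ≤ C) (hδ : ∀ t ≥ 0, 2 * w t ≤ w (C * t) + b) {a c t : ℝ} (ha : 1 ≤ a)
    (hc : C * a ≤ c) (ht : 0 ≤ t) : w (a * t) - w (c * t) ≤ b - w t := by
  have hat : t ≤ a * t := le_mul_of_one_le_left ht ha
  have h₁ : w t ≤ w (a * t) := hw_mono ht (ht.trans hat) hat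
  have h₂ : w (C * (a * t)) ≤ w (c * t) :=
    hw_mono (mem_Ici.2 (by positivity)) (mem_Ici.2 (by nlinarith))
      (by rw [← mul_assoc]; exact mul_le_mul_of_nonneg_right hc ht)
  linarith [hδ (a * t) (ht.trans hat)]

theorem stmt_12_general (w : ℝ → ℝ)
    (hw_mono : MonotoneOn w (Set.Ici (0:ℝ)))
    (hw_cont : ContinuousOn w (Set.Ici (0:ℝ)))
    (hw_unbdd : ∀ B : ℝ, ∃ t ≥ (0:ℝ), B < w t)
    (hδ : ∃ C > (0:ℝ), ∃ A > (1:ℝ), ∀ t ≥ (0:ℝ), 2 * w t ≤ w (C * t) + Real.log A) :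
    ∀ N : ℕ, ∃ M : ℕ, N ≤ M ∧ MeasureTheory.IntegrableOn
      (fun t => Real.exp (w (N * t) - w (M * t))) (Set.Ioi (0:ℝ)) := by
  obtain ⟨C, hC, A, -, hδ⟩ := hδ
  have hint := integrableOn_exp_neg_of_two_mul_le_add hw_mono hw_cont hw_unbdd hC.le hδ
  have hcont (N M : ℕ) : ContinuousOn (fun t : ℝ => w (N * t) - w (M * t)) (Ioi 0) :=
    ((hw_cont.comp_const_mul_Ici N.cast_nonneg).sub
      (hw_cont.comp_const_mul_Ici M.cast_nonneg)).mono Ioi_subset_Ici_self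
  intro N
  rcases N.eq_zero_or_pos with rfl | hN
  · refine ⟨1, zero_le_one, integrableOn_exp_of_le_sub hint (hcont 0 1) (w 0) ?_⟩
    intro _ _
    simp
  · refine ⟨max N ⌈C * N⌉₊, le_max_left _ _,
      integrableOn_exp_of_le_sub hint (hcont _ _) (log A) fun t ht => ?_⟩
    refine sub_le_sub_of_two_mul_le_add hw_mono hC.le hδ (by exact_mod_cast hN) ?_ ht.le
    push_cast
    exact (Nat.le_ceil _).trans (le_max_right _ _)

/-- If a weight function `w` satisfies (δ), then the system `W_w = (w(N·t))`
satisfies (N). -/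
theorem stmt_12 (w : ℝ → ℝ)
    (hw_nonneg : ∀ t ≥ (0:ℝ), 0 ≤ w t)
    (hw_mono : MonotoneOn w (Set.Ici (0:ℝ)))
    (hw_cont : ContinuousOn w (Set.Ici (0:ℝ)))
    (hw_unbdd : ∀ B : ℝ, ∃ t ≥ (0:ℝ), B < w t)
    (hδ : ∃ C > (0:ℝ), ∃ A > (1:ℝ), ∀ t ≥ (0:ℝ), 2 * w t ≤ w (C * t) + Real.log A) :
    ∀ N : ℕ, ∃ M : ℕ, N ≤ M ∧ MeasureTheory.IntegrableOn
      (fun t => Real.exp (w (N * t) - w (M * t))) (Set.Ioi (0:ℝ)) :=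
  stmt_12_general w hw_mono hw_cont hw_unbdd hδ
end

section
/- Let 0 < a < 1 and b ∈ ℝ, or a = 0 and b > 1, and let w be a weight function with w(t) = exp(t^a·(log(e+t))^b) for all sufficiently large t. Then w satisfies (δ) and (ε)₀ (for every μ > 0, ∫₀^∞ w(t)e^{−μt} dt < ∞), but w does not satisfy (α): there are no C > 0, A > 1 with w(2t) ≤ C·w(t) + log A for all t ≥ 0. -/
/-!
Write `w = exp ∘ φ` near infinity with `φ t = t ^ a * log (e + t) ^ b`. The whole argument rests
on `φ (2 t) - φ t → ∞`: for `a > 0` because `φ (2 t) / φ t → 2 ^ a > 1` while `φ → ∞`, and for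
`a = 0` because `log (e + 2 t) - log (e + t)` stays above `log (3/2)` while `b > 1`. Hence
`w (2 t) / w t → ∞`, which gives (δ) with `C = 2` and rules out (α). Since `a < 1`, `φ t = o(t)`,
so `w t e^{-μ t}` decays like `e^{-μ t / 2}`, which is (ε)₀.
-/

open Real Filter Asymptotics Set MeasureTheory

section ExponentialWeight

variable {w φ : ℝ → ℝ}

lemma eventually_mul_le_comp_two_mul (hw : ∀ᶠ t in atTop, w t = exp (φ t))
    (hφ : Tendsto (fun t => φ (2 * t) - φ t) atTop atTop) {K : ℝ} (hK : 0 < K) :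
    ∀ᶠ t in atTop, K * w t ≤ w (2 * t) := by
  have hw2 : ∀ᶠ t in atTop, w (2 * t) = exp (φ (2 * t)) :=
    (tendsto_id.const_mul_atTop two_pos).eventually hw
  filter_upwards [hw, hw2, hφ.eventually_ge_atTop (log K)] with t h1 h2 hgap
  rw [h1, h2, ← exp_log hK, ← exp_add]
  exact exp_le_exp.mpr (by linarith)

lemma exists_two_mul_le_add_log (hmono : MonotoneOn w (Ici 0))
    (hdouble : ∀ᶠ t in atTop, 2 * w t ≤ w (2 * t)) :
    ∃ A > (1 : ℝ), ∀ t ≥ (0 : ℝ), 2 * w t ≤ w (2 * t) + log A := by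
  obtain ⟨T, hT⟩ := eventually_atTop.mp hdouble
  set T₀ := max T 0
  refine ⟨exp (|w T₀| + 1), one_lt_exp_iff.mpr (by positivity), fun t ht => ?_⟩
  rw [log_exp]
  have hw2 : w t ≤ w (2 * t) := hmono ht (by simp only [mem_Ici]; linarith) (by linarith)
  rcases le_total t T₀ with htT | hTt
  · have : w t ≤ w T₀ := hmono ht (le_max_right T 0) htT
    linarith [le_abs_self (w T₀)]
  · linarith [hT t (le_trans (le_max_left T 0) hTt), abs_nonneg (w T₀)]

lemma not_exists_comp_two_mul_le_mul_add_log
    (hgrowth : ∀ K > 0, ∀ᶠ t in atTop, K * w t ≤ w (2 * t)) (hone : ∀ᶠ t in atTop, 1 ≤ w t) :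
    ¬ ∃ C > (0 : ℝ), ∃ A > (1 : ℝ), ∀ t ≥ (0 : ℝ), w (2 * t) ≤ C * w t + log A := by
  rintro ⟨C, hC, A, hA, hα⟩
  have hlogA : 0 < log A := log_pos hA
  obtain ⟨t, hK, h1, ht⟩ :=
    ((hgrowth (C + log A + 1) (by positivity)).and (hone.and (eventually_ge_atTop 0))).exists
  nlinarith [hα t ht]

lemma integrableOn_mul_exp_neg_of_isLittleO (hcont : ContinuousOn w (Ici 0))
    (hw : ∀ᶠ t in atTop, w t = exp (φ t)) (hφ : φ =o[atTop] id) {μ : ℝ} (hμ : 0 < μ) :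
    IntegrableOn (fun t => w t * exp (-μ * t)) (Ioi 0) := by
  have hexp : Continuous fun t => exp (-μ * t) := by fun_prop
  refine integrable_of_isBigO_exp_neg (half_pos hμ) (hcont.mul hexp.continuousOn) ?_
  refine IsBigO.of_bound' ?_
  filter_upwards [hw, hφ.bound (half_pos hμ), eventually_ge_atTop 0] with t hwt hφt ht
  rw [hwt, ← exp_add, norm_of_nonneg (exp_pos _).le, norm_of_nonneg (exp_pos _).le]
  rw [norm_eq_abs, id, norm_of_nonneg ht] at hφt
  exact exp_le_exp.mpr (by linarith [le_abs_self (φ t)])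

end ExponentialWeight

noncomputable def logE (t : ℝ) : ℝ := log (exp 1 + t)

lemma one_le_logE {t : ℝ} (ht : 0 ≤ t) : 1 ≤ logE t := by
  rw [logE, le_log_iff_exp_le (by positivity)]
  linarith

lemma logE_pos {t : ℝ} (ht : 0 ≤ t) : 0 < logE t :=
  one_pos.trans_le (one_le_logE ht)

lemma tendsto_logE_atTop : Tendsto logE atTop atTop :=
  tendsto_log_atTop.comp (tendsto_atTop_add_const_left _ _ tendsto_id)

lemma logE_le_logE_two_mul {t : ℝ} (ht : 0 ≤ t) : logE t ≤ logE (2 * t) :=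
  log_le_log (by positivity) (by linarith)

lemma logE_two_mul_le {t : ℝ} (ht : 0 ≤ t) : logE (2 * t) ≤ log 2 + logE t := by
  rw [logE, logE, ← log_mul two_ne_zero (by positivity)]
  exact log_le_log (by positivity) (by linarith [exp_pos 1])

lemma log_three_halves_add_logE_le {t : ℝ} (ht : 3 ≤ t) :
    log (3 / 2) + logE t ≤ logE (2 * t) := by
  rw [logE, logE, ← log_mul (by norm_num) (by positivity)]
  exact log_le_log (by positivity) (by linarith [exp_one_lt_d9])

lemma tendsto_logE_two_mul_div : Tendsto (fun t => logE (2 * t) / logE t) atTop (nhds 1) := by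
  have hdiff : Tendsto (fun t => (logE (2 * t) - logE t) / logE t) atTop (nhds 0) := by
    have hbound : Tendsto (fun t => log 2 * (logE t)⁻¹) atTop (nhds 0) := by
      simpa using tendsto_logE_atTop.inv_tendsto_atTop.const_mul (log 2)
    refine squeeze_zero' ?_ ?_ hbound
    all_goals filter_upwards [eventually_ge_atTop 0] with t ht
    · exact div_nonneg (by linarith [logE_le_logE_two_mul ht]) (logE_pos ht).le
    · rw [← div_eq_mul_inv]
      gcongr
      · exact (logE_pos ht).le
      · linarith [logE_two_mul_le ht]
  refine (hdiff.add_const 1).congr' ?_ |>.trans (by rw [zero_add])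
  filter_upwards [eventually_ge_atTop 0] with t ht
  field_simp [(logE_pos ht).ne']
  ring

lemma isLittleO_logE_rpow (c : ℝ) {s : ℝ} (hs : 0 < s) :
    (fun t => logE t ^ c) =o[atTop] fun t => t ^ s := by
  have hshift : Tendsto (fun t => exp 1 + t) atTop atTop :=
    tendsto_atTop_add_const_left _ _ tendsto_id
  refine ((isLittleO_log_rpow_rpow_atTop c hs).comp_tendsto hshift).trans_isBigO ?_
  refine IsBigO.of_bound (2 ^ s) ?_
  filter_upwards [eventually_ge_atTop 3] with t ht
  have he : exp 1 + t ≤ 2 * t := by linarith [exp_one_lt_d9]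
  simp only [Function.comp, norm_of_nonneg (rpow_nonneg (by positivity : (0 : ℝ) ≤ exp 1 + t) s),
    norm_of_nonneg (rpow_nonneg (by positivity : (0 : ℝ) ≤ t) s),
    ← mul_rpow zero_le_two (by positivity : (0 : ℝ) ≤ t)]
  exact rpow_le_rpow (by positivity) he hs.le

noncomputable def weightExponent (a b t : ℝ) : ℝ := t ^ a * logE t ^ b

lemma weightExponent_nonneg (a b : ℝ) {t : ℝ} (ht : 0 ≤ t) : 0 ≤ weightExponent a b t :=
  mul_nonneg (rpow_nonneg ht a) (rpow_nonneg (logE_pos ht).le b)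

lemma isLittleO_weightExponent {a : ℝ} (b : ℝ) (ha : a < 1) :
    weightExponent a b =o[atTop] id := by
  have h := (isBigO_refl (fun t : ℝ => t ^ a) atTop).mul_isLittleO
    (isLittleO_logE_rpow b (sub_pos.mpr ha))
  refine h.congr' EventuallyEq.rfl ?_
  filter_upwards [eventually_gt_atTop 0] with t ht
  rw [← rpow_add ht, add_sub_cancel, rpow_one, id]

lemma tendsto_weightExponent_atTop {a : ℝ} (b : ℝ) (ha : 0 < a) :
    Tendsto (weightExponent a b) atTop atTop := by
  have hratio : Tendsto (fun t => logE t ^ (-b) / t ^ a) atTop (nhdsWithin 0 (Ioi 0)) := by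
    refine tendsto_nhdsWithin_iff.mpr ⟨(isLittleO_logE_rpow (-b) ha).tendsto_div_nhds_zero, ?_⟩
    filter_upwards [eventually_gt_atTop 0] with t ht
    exact div_pos (rpow_pos_of_pos (logE_pos ht.le) _) (rpow_pos_of_pos ht a)
  refine hratio.inv_tendsto_nhdsGT_zero.congr' ?_
  filter_upwards [eventually_gt_atTop 0] with t ht
  rw [Pi.inv_apply, inv_div, rpow_neg (logE_pos ht.le).le, div_inv_eq_mul, weightExponent]

lemma weightExponent_two_mul {a : ℝ} (b : ℝ) {t : ℝ} (ht : 0 < t) :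
    weightExponent a b (2 * t) = 2 ^ a * (logE (2 * t) / logE t) ^ b * weightExponent a b t := by
  have hL := logE_pos ht.le
  rw [weightExponent, weightExponent, mul_rpow zero_le_two ht.le,
    div_rpow (logE_pos (by positivity)).le hL.le]
  field_simp [(rpow_pos_of_pos hL b).ne']

lemma tendsto_weightExponent_two_mul_sub_of_pos {a : ℝ} (b : ℝ) (ha : 0 < a) :
    Tendsto (fun t => weightExponent a b (2 * t) - weightExponent a b t) atTop atTop := by
  have hfactor : Tendsto (fun t => 2 ^ a * (logE (2 * t) / logE t) ^ b - 1) atTop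
      (nhds (2 ^ a - 1)) := by
    simpa using ((tendsto_logE_two_mul_div.rpow_const (Or.inl one_ne_zero)).const_mul
      ((2 : ℝ) ^ a)).sub_const 1
  refine ((tendsto_weightExponent_atTop b ha).atTop_mul_pos ?_ hfactor).congr' ?_
  · linarith [one_lt_rpow one_lt_two ha]
  · filter_upwards [eventually_gt_atTop 0] with t ht
    rw [weightExponent_two_mul b ht]
    ring

lemma tendsto_weightExponent_zero_two_mul_sub {b : ℝ} (hb : 1 < b) :
    Tendsto (fun t => weightExponent 0 b (2 * t) - weightExponent 0 b t) atTop atTop := by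
  have hlower : Tendsto (fun t => log (3 / 2) * logE t ^ (b - 1)) atTop atTop :=
    ((tendsto_rpow_atTop (sub_pos.mpr hb)).comp tendsto_logE_atTop).const_mul_atTop
      (log_pos (by norm_num))
  refine tendsto_atTop_mono' atTop ?_ hlower
  filter_upwards [eventually_ge_atTop 3] with t ht
  have hL := logE_pos (by linarith : (0 : ℝ) ≤ t)
  have hL2 := logE_pos (by linarith : (0 : ℝ) ≤ 2 * t)
  have hmono : logE t ^ (b - 1) ≤ logE (2 * t) ^ (b - 1) :=
    rpow_le_rpow hL.le (logE_le_logE_two_mul (by linarith)) (by linarith)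
  have hgap := log_three_halves_add_logE_le ht
  -- `x ^ b - y ^ b ≥ y ^ (b - 1) * (x - y)` because `x ^ (b - 1) ≥ y ^ (b - 1)`
  calc log (3 / 2) * logE t ^ (b - 1)
      ≤ logE t ^ (b - 1) * (logE (2 * t) - logE t) := by
        rw [mul_comm]; gcongr; linarith
    _ ≤ logE (2 * t) ^ (b - 1) * logE (2 * t) - logE t ^ (b - 1) * logE t := by
        linarith [mul_le_mul_of_nonneg_right hmono hL2.le]
    _ = weightExponent 0 b (2 * t) - weightExponent 0 b t := by
        rw [weightExponent, weightExponent, rpow_zero, rpow_zero, one_mul, one_mul,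
          ← rpow_add_one hL.ne', ← rpow_add_one hL2.ne', sub_add_cancel]

lemma tendsto_weightExponent_two_mul_sub {a b : ℝ} (hab : (0 < a ∧ a < 1) ∨ (a = 0 ∧ 1 < b)) :
    Tendsto (fun t => weightExponent a b (2 * t) - weightExponent a b t) atTop atTop := by
  rcases hab with ⟨ha, -⟩ | ⟨rfl, hb⟩
  · exact tendsto_weightExponent_two_mul_sub_of_pos b ha
  · exact tendsto_weightExponent_zero_two_mul_sub hb

theorem stmt_15_general (w : ℝ → ℝ) (a b : ℝ)
    (hab : (0 < a ∧ a < 1) ∨ (a = 0 ∧ 1 < b))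
    (hw_mono : MonotoneOn w (Set.Ici (0:ℝ)))
    (hw_cont : ContinuousOn w (Set.Ici (0:ℝ)))
    (hw_eq : ∃ T : ℝ, ∀ t ≥ T,
      w t = Real.exp (t ^ a * (Real.log (Real.exp 1 + t)) ^ b)) :
    (∃ C > (0:ℝ), ∃ A > (1:ℝ), ∀ t ≥ (0:ℝ), 2 * w t ≤ w (C * t) + Real.log A) ∧
    (∀ μ > (0:ℝ), MeasureTheory.IntegrableOn
        (fun t => w t * Real.exp (-μ * t)) (Set.Ioi (0:ℝ))) ∧
    ¬ (∃ C > (0:ℝ), ∃ A > (1:ℝ), ∀ t ≥ (0:ℝ), w (2 * t) ≤ C * w t + Real.log A) := by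
  have hw : ∀ᶠ t in atTop, w t = exp (weightExponent a b t) := eventually_atTop.mpr hw_eq
  have hgrowth : ∀ K > 0, ∀ᶠ t in atTop, K * w t ≤ w (2 * t) := fun K hK =>
    eventually_mul_le_comp_two_mul hw (tendsto_weightExponent_two_mul_sub hab) hK
  have hone : ∀ᶠ t in atTop, 1 ≤ w t := by
    filter_upwards [hw, eventually_ge_atTop 0] with t hwt ht
    exact hwt ▸ one_le_exp (weightExponent_nonneg a b ht)
  have ha : a < 1 := by
    rcases hab with ⟨-, ha⟩ | ⟨rfl, -⟩
    exacts [ha, one_pos]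
  exact ⟨⟨2, two_pos, exists_two_mul_le_add_log hw_mono (hgrowth 2 two_pos)⟩,
    fun μ hμ => integrableOn_mul_exp_neg_of_isLittleO hw_cont hw (isLittleO_weightExponent b ha) hμ,
    not_exists_comp_two_mul_le_mul_add_log hgrowth hone⟩

/-- A weight function equal to `exp(t^a (log(e+t))^b)` for large `t`, with
`0 < a < 1` (any `b`) or `a = 0`, `b > 1`, satisfies (δ) and (ε)₀ but not (α). -/
theorem stmt_15 (w : ℝ → ℝ) (a b : ℝ)
    (hab : (0 < a ∧ a < 1) ∨ (a = 0 ∧ 1 < b))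
    (hw_nonneg : ∀ t ≥ (0:ℝ), 0 ≤ w t)
    (hw_mono : MonotoneOn w (Set.Ici (0:ℝ)))
    (hw_cont : ContinuousOn w (Set.Ici (0:ℝ)))
    (hw_unbdd : ∀ B : ℝ, ∃ t ≥ (0:ℝ), B < w t)
    (hw_eq : ∃ T : ℝ, ∀ t ≥ T,
      w t = Real.exp (t ^ a * (Real.log (Real.exp 1 + t)) ^ b)) :
    (∃ C > (0:ℝ), ∃ A > (1:ℝ), ∀ t ≥ (0:ℝ), 2 * w t ≤ w (C * t) + Real.log A) ∧
    (∀ μ > (0:ℝ), MeasureTheory.IntegrableOn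
        (fun t => w t * Real.exp (-μ * t)) (Set.Ioi (0:ℝ))) ∧
    ¬ (∃ C > (0:ℝ), ∃ A > (1:ℝ), ∀ t ≥ (0:ℝ), w (2 * t) ≤ C * w t + Real.log A) :=
  stmt_15_general w a b hab hw_mono hw_cont hw_eq
end
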